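/- If Y is a locally AMUC Banach space and w is an admissible sequence, then every norm-attaining bounded linear operator T from d_*(w) into Y satisfies lim_n ‖T e_n‖ = 0, where (e_n) is the unit vector basis of d_*(w). -/

import Mathlib

open Filter Topology

/-- The asymptotic midpoint modulus `δ̃_Y(y,t)`: the supremum, over all closed
finite-codimensional subspaces `E` of `Y`, of
`inf_{z ∈ S_E} max {‖y + t z‖, ‖y - t z‖} - 1`. -/
noncomputable def deltaTilde (Y : Type*) [NormedAddCommGroup Y] [NormedSpace ℝ Y]
    (y : Y) (t : ℝ) : ℝ :=
  sSup {r : ℝ | ∃ E : Submodule ℝ Y, IsClosed (E : Set Y) ∧ FiniteDimensional ℝ (Y ⧸ E) ∧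
    r = sInf {m : ℝ | ∃ z : Y, z ∈ E ∧ ‖z‖ = 1 ∧ m = max ‖y + t • z‖ ‖y - t • z‖} - 1}

/-- A Banach space `Y` is locally asymptotically midpoint uniformly convex (locally AMUC)
if `δ̃_Y(y,t) > 0` for every `y ∈ S_Y` and every `t > 0`. -/
def LocallyAMUC (Y : Type*) [NormedAddCommGroup Y] [NormedSpace ℝ Y] : Prop :=
  ∀ y : Y, ‖y‖ = 1 → ∀ t : ℝ, 0 < t → 0 < deltaTilde Y y t

open Filter Topology

/-- `rearrSum x n = ∑_{k=1}^n x̃_k`, the sum of the `n` largest values of `(|x_k|)`,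
i.e. the `n`-th partial sum of the nonincreasing rearrangement of `(|x_k|)`; it is the
supremum of `∑_{k ∈ A} |x_k|` over finite sets `A ⊆ ℕ` of cardinality `n`. -/
noncomputable def rearrSum (x : ℕ → ℝ) (n : ℕ) : ℝ :=
  sSup ((fun A : Finset ℕ => ∑ k ∈ A, |x k|) '' {A : Finset ℕ | A.card = n})

/-- A sequence of positive reals is admissible if it is nonincreasing, starts at `1`,
tends to `0` and is not summable. -/
def Admissible (w : ℕ → ℝ) : Prop :=
  (∀ n, 0 < w n) ∧ (∀ n, w (n + 1) ≤ w n) ∧ w 0 = 1 ∧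
    Tendsto w atTop (𝓝 0) ∧ ¬ Summable w

/-- The underlying set of sequences of `d_*(w)`: sequences `x ∈ c₀` with
`(∑_{k=1}^n x̃_k) / (∑_{k=1}^n w_k) → 0`. -/
def dStarSet (w : ℕ → ℝ) : Set (ℕ → ℝ) :=
  {x | Tendsto x atTop (𝓝 0) ∧
    Tendsto (fun n => rearrSum x n / ∑ k ∈ Finset.range n, w k) atTop (𝓝 0)}

/-- The norm of `d_*(w)`: `‖x‖ = sup_n (∑_{k=1}^n x̃_k) / (∑_{k=1}^n w_k)`. -/
noncomputable def dStarNorm (w : ℕ → ℝ) (x : ℕ → ℝ) : ℝ :=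
  ⨆ n : ℕ, rearrSum x n / ∑ k ∈ Finset.range n, w k

/-- A normed space `D` is a representation of `d_*(w)` if there is a linear bijection `j`
from `D` onto the set of sequences of `d_*(w)` carrying the norm of `D` to the norm of
`d_*(w)`; i.e. `D` "is" the space `d_*(w)` endowed with its canonical norm. -/
def IsDStarRep (w : ℕ → ℝ) (D : Type*) [NormedAddCommGroup D] [NormedSpace ℝ D]
    (j : D →ₗ[ℝ] (ℕ → ℝ)) : Prop :=
  Function.Injective j ∧ Set.range j = dStarSet w ∧ ∀ x : D, ‖x‖ = dStarNorm w (j x)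

/-!
The basis `(e n)` of `d_*(w)` is weakly null: `N` vectors `e n` with `|g (e n)| ≥ ε` have a signed
sum of norm at most `N / W N`, where `W N = ∑_{k<N} w k → ∞`, so `ε N ≤ ‖g‖ N / W N` bounds `N`.
A vector `x` of the unit ball leaves room for a fixed bump: the partial sums of its decreasing
rearrangement are `o(W m)`, which gives a slack `τ > 0` with `x̃_1 + … + x̃_m + τ ≤ W (m + 1)`, and
as `x n → 0` this yields `‖x ± t e n‖ ≤ 1` for some `t > 0` and all large `n`.

If `‖T x‖ = ‖T‖`, the sequence `v n = t T (e n)` is therefore weakly null with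
`‖T x ± v n‖ ≤ ‖T x‖` eventually. In a locally AMUC space this forces `‖v n‖ → 0`: weak nullness
puts `v n / ‖v n‖` near the unit sphere of any closed finite-codimensional subspace `E`, on which
`max ‖y + s z‖ ‖y - s z‖` stays above `1` for a suitable `E`.
-/

open Finset

theorem Antitone.mul_sum_range_le {f : ℕ → ℝ} (hf : Antitone f) {m n : ℕ} (hmn : m ≤ n) :
    (m : ℝ) * ∑ k ∈ range n, f k ≤ n * ∑ k ∈ range m, f k := by
  induction n, hmn using Nat.le_induction with
  | base => rfl
  | succ n hmn ih =>
    have hfn : (m : ℝ) * f n ≤ ∑ k ∈ range m, f k := by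
      simpa [mul_comm] using card_nsmul_le_sum (range m) f (f n)
        fun k hk => hf (hmn.trans' (mem_range.1 hk).le)
    rw [sum_range_succ]
    push_cast
    linarith

namespace Admissible

variable {w : ℕ → ℝ}

theorem antitone (hw : Admissible w) : Antitone w :=
  antitone_nat_of_succ_le hw.2.1

theorem sum_range_mono (hw : Admissible w) : Monotone fun n => ∑ k ∈ range n, w k :=
  fun _ _ h => sum_le_sum_of_subset_of_nonneg (range_mono h) fun n _ _ => (hw.1 n).le

theorem one_le_sum_range (hw : Admissible w) {n : ℕ} (hn : n ≠ 0) : 1 ≤ ∑ k ∈ range n, w k := by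
  simpa [hw.2.2.1] using hw.sum_range_mono (Nat.one_le_iff_ne_zero.2 hn)

theorem sum_range_pos (hw : Admissible w) {n : ℕ} (hn : n ≠ 0) : 0 < ∑ k ∈ range n, w k :=
  one_pos.trans_le (hw.one_le_sum_range hn)

theorem tendsto_sum_range_atTop (hw : Admissible w) :
    Tendsto (fun n => ∑ k ∈ range n, w k) atTop atTop :=
  (not_summable_iff_tendsto_nat_atTop_of_nonneg fun n => (hw.1 n).le).1 hw.2.2.2.2

theorem card_div_sum_range_le (hw : Admissible w) {m n : ℕ} (hm : m ≠ 0) (hmn : m ≤ n) :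
    m / ∑ k ∈ range m, w k ≤ n / ∑ k ∈ range n, w k := by
  rw [div_le_div_iff₀ (hw.sum_range_pos hm) (hw.sum_range_pos (by omega))]
  exact hw.antitone.mul_sum_range_le hmn

end Admissible

section DStar

variable {w x : ℕ → ℝ}

theorem rearrSum_zero (x : ℕ → ℝ) : rearrSum x 0 = 0 := by
  simp [rearrSum, Finset.card_eq_zero]

theorem rearrSum_le {n : ℕ} {B : ℝ} (h : ∀ A : Finset ℕ, A.card = n → ∑ k ∈ A, |x k| ≤ B) :
    rearrSum x n ≤ B :=
  csSup_le ⟨_, range n, card_range n, rfl⟩ <| by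
    rintro _ ⟨A, hA, rfl⟩
    exact h A hA

theorem sum_abs_le_rearrSum (hx : BddAbove (Set.range fun k => |x k|)) (A : Finset ℕ) :
    ∑ k ∈ A, |x k| ≤ rearrSum x A.card := by
  obtain ⟨C, hC⟩ := hx
  refine le_csSup ⟨A.card * C, ?_⟩ ⟨A, rfl, rfl⟩
  rintro _ ⟨B, hB, rfl⟩
  have hB : B.card = A.card := hB
  simpa [hB] using sum_le_card_nsmul B (fun k => |x k|) C fun k _ => hC ⟨k, rfl⟩

theorem dStarNorm_le (hw : Admissible w) {B : ℝ} (hB : 0 ≤ B)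
    (h : ∀ n ≠ 0, rearrSum x n ≤ B * ∑ k ∈ range n, w k) : dStarNorm w x ≤ B := by
  refine ciSup_le fun n => ?_
  rcases eq_or_ne n 0 with rfl | hn
  · simpa [rearrSum_zero] using hB
  · rw [div_le_iff₀ (hw.sum_range_pos hn)]
    exact h n hn

theorem rearrSum_le_dStarNorm_mul (hw : Admissible w) (hx : x ∈ dStarSet w) (n : ℕ) :
    rearrSum x n ≤ dStarNorm w x * ∑ k ∈ range n, w k := by
  rcases eq_or_ne n 0 with rfl | hn
  · simp [rearrSum_zero]
  · rw [← div_le_iff₀ (hw.sum_range_pos hn)]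
    exact le_ciSup hx.2.bddAbove_range n

theorem rearrSum_le_sum_range (hw : Admissible w) (hx : x ∈ dStarSet w)
    (hx1 : dStarNorm w x ≤ 1) (n : ℕ) : rearrSum x n ≤ ∑ k ∈ range n, w k :=
  (rearrSum_le_dStarNorm_mul hw hx n).trans <|
    mul_le_of_le_one_left (sum_nonneg fun k _ => (hw.1 k).le) hx1

theorem dStarNorm_le_card_div (hw : Admissible w) {S : Finset ℕ} (hS : S.Nonempty)
    (hx : ∀ k, |x k| ≤ 1) (hxS : ∀ k ∉ S, x k = 0) :
    dStarNorm w x ≤ S.card / ∑ k ∈ range S.card, w k := by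
  have hWS := hw.sum_range_pos hS.card_pos.ne'
  refine dStarNorm_le hw (by positivity) fun m hm => rearrSum_le fun A hA => ?_
  have hW := hw.sum_range_pos hm
  have hAS : ∑ k ∈ A, |x k| ≤ (A ∩ S).card := by
    rw [← sum_inter_add_sum_sdiff A S,
      sum_eq_zero (s := A \ S) fun k hk => by simp [hxS k (Finset.mem_sdiff.1 hk).2], add_zero]
    simpa using sum_le_card_nsmul (A ∩ S) (fun k => |x k|) 1 fun k _ => hx k
  refine hAS.trans ?_
  rcases le_total m S.card with hmS | hSm
  · calc ((A ∩ S).card : ℝ) ≤ m := by exact_mod_cast hA ▸ card_le_card inter_subset_left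
      _ = (m / ∑ k ∈ range m, w k) * ∑ k ∈ range m, w k := (div_mul_cancel₀ _ hW.ne').symm
      _ ≤ _ := mul_le_mul_of_nonneg_right (hw.card_div_sum_range_le hm hmS) hW.le
  · calc ((A ∩ S).card : ℝ) ≤ S.card := by exact_mod_cast card_le_card inter_subset_right
      _ = (S.card / ∑ k ∈ range S.card, w k) * ∑ k ∈ range S.card, w k :=
        (div_mul_cancel₀ _ hWS.ne').symm
      _ ≤ _ := mul_le_mul_of_nonneg_left (hw.sum_range_mono hSm) (by positivity)

theorem exists_pos_forall_rearrSum_add_le (hw : Admissible w) (hx : x ∈ dStarSet w)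
    (hx1 : dStarNorm w x ≤ 1) :
    ∃ τ > 0, ∀ m, rearrSum x m + τ ≤ ∑ k ∈ range (m + 1), w k := by
  obtain ⟨M, hM⟩ := eventually_atTop.1
    ((eventually_ne_atTop 0).and (hx.2.eventually_le_const one_half_pos))
  -- From `M` on the ratio is at most `1 / 2`; before `M` the slack is `w m ≥ w M`.
  refine ⟨min (w M) (1 / 2), lt_min (hw.1 M) one_half_pos, fun m => ?_⟩
  rw [sum_range_succ]
  rcases lt_or_ge m M with hmM | hMm
  · have := rearrSum_le_sum_range hw hx hx1 m
    have := (min_le_left (w M) (1 / 2 : ℝ)).trans (hw.antitone hmM.le)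
    linarith
  · obtain ⟨hm, hhalf⟩ := hM m hMm
    rw [div_le_iff₀ (hw.sum_range_pos hm)] at hhalf
    have := hw.one_le_sum_range hm
    have := min_le_right (w M) (1 / 2)
    linarith [hw.1 m]

theorem exists_pos_dStarNorm_add_single_le_one (hw : Admissible w) (hx : x ∈ dStarSet w)
    (hx1 : dStarNorm w x ≤ 1) :
    ∃ τ > 0, ∀ n c, |x n| + |c| ≤ τ → dStarNorm w (x + Pi.single n c) ≤ 1 := by
  obtain ⟨τ, hτ, hslack⟩ := exists_pos_forall_rearrSum_add_le hw hx hx1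
  have hbdd : BddAbove (Set.range fun k => |x k|) := by
    simpa using hx.1.abs.bddAbove_range
  refine ⟨τ, hτ, fun n c hc => dStarNorm_le hw zero_le_one fun m hm => rearrSum_le fun A hA => ?_⟩
  rw [one_mul]
  by_cases hnA : n ∈ A
  · have hrest : ∑ k ∈ A.erase n, |x k| ≤ rearrSum x (m - 1) := by
      simpa [card_erase_of_mem hnA, hA] using sum_abs_le_rearrSum hbdd (A.erase n)
    calc ∑ k ∈ A, |(x + Pi.single n c : ℕ → ℝ) k| = |x n + c| + ∑ k ∈ A.erase n, |x k| := by
          rw [← add_sum_erase A _ hnA]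
          congr 1
          · simp
          · exact sum_congr rfl fun k hk => by simp [ne_of_mem_erase hk]
      _ ≤ τ + rearrSum x (m - 1) := add_le_add ((abs_add_le _ _).trans hc) hrest
      _ ≤ ∑ k ∈ range m, w k := by
          simpa [Nat.sub_add_cancel (Nat.one_le_iff_ne_zero.2 hm), add_comm] using hslack (m - 1)
  · calc ∑ k ∈ A, |(x + Pi.single n c : ℕ → ℝ) k| = ∑ k ∈ A, |x k| :=
          sum_congr rfl fun k hk => by simp [ne_of_mem_of_not_mem hk hnA]
      _ ≤ rearrSum x m := hA ▸ sum_abs_le_rearrSum hbdd A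
      _ ≤ ∑ k ∈ range m, w k := rearrSum_le_sum_range hw hx hx1 m

namespace IsDStarRep

variable {D : Type*} [NormedAddCommGroup D] [NormedSpace ℝ D] {j : D →ₗ[ℝ] (ℕ → ℝ)} {e : ℕ → D}

theorem norm_sum_smul_le (hw : Admissible w) (hj : IsDStarRep w D j)
    (he : ∀ n, j (e n) = Pi.single n 1) {S : Finset ℕ} (hS : S.Nonempty) {c : ℕ → ℝ}
    (hc : ∀ n, |c n| ≤ 1) :
    ‖∑ n ∈ S, c n • e n‖ ≤ S.card / ∑ k ∈ range S.card, w k := by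
  have hjS : ∀ k, j (∑ n ∈ S, c n • e n) k = if k ∈ S then c k else 0 := fun k => by
    simp [he, ← Pi.single_smul', Finset.sum_apply]
  rw [hj.2.2]
  refine dStarNorm_le_card_div hw hS (fun k => ?_) fun k hk => by simp [hjS, hk]
  rw [hjS]
  split_ifs
  exacts [hc k, by simp]

theorem mul_sum_range_le_opNorm (hw : Admissible w) (hj : IsDStarRep w D j)
    (he : ∀ n, j (e n) = Pi.single n 1) (g : D →L[ℝ] ℝ) {ε : ℝ} {S : Finset ℕ}
    (hS : S.Nonempty) (hSε : ∀ n ∈ S, ε ≤ |g (e n)|) :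
    ε * ∑ k ∈ range S.card, w k ≤ ‖g‖ := by
  have hsign : ∀ a : ℝ, |(SignType.sign a : ℝ)| ≤ 1 := fun a => by
    rcases SignType.sign a with _ | _ | _ <;> simp
  have key : ε * S.card ≤ ‖g‖ * (S.card / ∑ k ∈ range S.card, w k) :=
    calc ε * S.card ≤ ∑ n ∈ S, |g (e n)| := by
          simpa [mul_comm] using card_nsmul_le_sum S _ ε hSε
      _ = g (∑ n ∈ S, (SignType.sign (g (e n)) : ℝ) • e n) := by simp [sign_mul_self]
      _ ≤ ‖g‖ * ‖∑ n ∈ S, (SignType.sign (g (e n)) : ℝ) • e n‖ :=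
        (le_abs_self _).trans (g.le_opNorm _)
      _ ≤ _ := mul_le_mul_of_nonneg_left (hj.norm_sum_smul_le hw he hS fun _ => hsign _)
        (norm_nonneg g)
  rw [mul_div_assoc', le_div_iff₀ (hw.sum_range_pos hS.card_pos.ne')] at key
  exact le_of_mul_le_mul_right (by linarith) (Nat.cast_pos.2 hS.card_pos)

theorem tendsto_apply_zero (hw : Admissible w) (hj : IsDStarRep w D j)
    (he : ∀ n, j (e n) = Pi.single n 1) (g : D →L[ℝ] ℝ) :
    Tendsto (fun n => g (e n)) atTop (𝓝 0) := by
  refine Metric.tendsto_nhds.2 fun ε hε => ?_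
  obtain ⟨N, hN0, hN⟩ := ((eventually_ne_atTop 0).and
    (hw.tendsto_sum_range_atTop.eventually_gt_atTop (‖g‖ / ε))).exists
  have hfin : {n | ε ≤ |g (e n)|}.Finite := by
    by_contra hinf
    obtain ⟨S, hS, rfl⟩ := Set.Infinite.exists_subset_card_eq hinf N
    have := hj.mul_sum_range_le_opNorm hw he g (card_ne_zero.1 hN0) hS
    rw [div_lt_iff₀ hε] at hN
    linarith
  simpa [Real.dist_eq, ← Nat.cofinite_eq_atTop] using hfin.eventually_cofinite_notMem

theorem exists_pos_eventually_norm_add_smul_le_one (hw : Admissible w) (hj : IsDStarRep w D j)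
    (he : ∀ n, j (e n) = Pi.single n 1) {x : D} (hx : ‖x‖ ≤ 1) :
    ∃ t : ℝ, 0 < t ∧ ∀ᶠ n in atTop, ‖x + t • e n‖ ≤ 1 ∧ ‖x - t • e n‖ ≤ 1 := by
  have hjx : j x ∈ dStarSet w := hj.2.1 ▸ Set.mem_range_self x
  obtain ⟨τ, hτ, hadd⟩ := exists_pos_dStarNorm_add_single_le_one hw hjx (hj.2.2 x ▸ hx)
  have hjx0 : Tendsto (fun n => |j x n|) atTop (𝓝 0) := by simpa using hjx.1.abs
  have hsmall : ∀ᶠ n in atTop, |j x n| ≤ τ / 2 := hjx0.eventually_le_const (half_pos hτ)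
  refine ⟨τ / 2, half_pos hτ, hsmall.mono fun n hn => ?_⟩
  have hnorm : ∀ c : ℝ, |c| = τ / 2 → ‖x + c • e n‖ ≤ 1 := fun c hc => by
    rw [hj.2.2, map_add, map_smul, he, ← Pi.single_smul', smul_eq_mul, mul_one]
    exact hadd n c (by linarith)
  refine ⟨hnorm _ (abs_of_pos (half_pos hτ)), ?_⟩
  simpa [sub_eq_add_neg] using hnorm (-(τ / 2)) (by rw [abs_neg, abs_of_pos (half_pos hτ)])

end IsDStarRep

end DStar

theorem tendsto_zero_of_forall_dual_tendsto {𝕜 F ι : Type*} [NontriviallyNormedField 𝕜]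
    [CompleteSpace 𝕜] [NormedAddCommGroup F] [NormedSpace 𝕜 F] [FiniteDimensional 𝕜 F]
    {l : Filter ι} {f : ι → F} (h : ∀ φ : F →L[𝕜] 𝕜, Tendsto (fun i => φ (f i)) l (𝓝 0)) :
    Tendsto f l (𝓝 0) := by
  let b := (Module.finBasis 𝕜 F).equivFunL
  have hb : Tendsto (fun i => b (f i)) l (𝓝 0) :=
    tendsto_pi_nhds.2 fun k => h ((ContinuousLinearMap.proj k).comp b.toContinuousLinearMap)
  simpa [Function.comp_def] using (b.symm.continuous.tendsto 0).comp hb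

theorem norm_add_smul_le_of_norm_le {E : Type*} [SeminormedAddCommGroup E] [NormedSpace ℝ E]
    {y v : E} {c t : ℝ} (hy : ‖y‖ ≤ c) (hyv : ‖y + v‖ ≤ c) (ht : t ∈ Set.Icc 0 1) :
    ‖y + t • v‖ ≤ c := by
  simpa using (convex_closedBall (0 : E) c).add_smul_mem (by simpa using hy) (by simpa using hyv) ht

open NormedSpace in
theorem Submodule.exists_mem_norm_eq_one_norm_sub_lt {Y : Type*} [NormedAddCommGroup Y]
    [NormedSpace ℝ Y] {E : Submodule ℝ Y} {u : Y} (hu : ‖u‖ = 1) {η : ℝ} (hη : η ≤ 1)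
    (h : ‖(Submodule.Quotient.mk u : Y ⧸ E)‖ < η) : ∃ z ∈ E, ‖z‖ = 1 ∧ ‖u - z‖ < 2 * η := by
  obtain ⟨m, hm, hmη⟩ := Submodule.Quotient.norm_mk_lt (Submodule.Quotient.mk u : Y ⧸ E)
    (sub_pos.2 h)
  have hmemE : u - m ∈ E := by
    simpa using E.neg_mem ((Submodule.Quotient.eq E).1 hm)
  have huv : ‖u - (u - m)‖ < η := by simpa using hmη
  have hnorm : |‖u - m‖ - 1| < η := by
    simpa [hu, abs_sub_comm] using (abs_norm_sub_norm_le u (u - m)).trans_lt huv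
  have hne : u - m ≠ 0 := fun h0 => by
    simp [h0] at hnorm
    linarith
  refine ⟨normalize (u - m), E.smul_mem _ hmemE, norm_normalize_eq_one_iff.2 hne, ?_⟩
  have hsub : (u - m) - normalize (u - m) = (‖u - m‖ - 1) • normalize (u - m) := by
    rw [sub_smul, one_smul, norm_smul_normalize]
  calc ‖u - normalize (u - m)‖ ≤ ‖u - (u - m)‖ + ‖(u - m) - normalize (u - m)‖ :=
        norm_sub_le_norm_sub_add_norm_sub _ _ _
    _ < η + η := by
        refine add_lt_add_of_lt_of_le huv ?_
        rw [hsub, norm_smul, norm_normalize_eq_one_iff.2 hne, mul_one, Real.norm_eq_abs]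
        exact hnorm.le
    _ = 2 * η := by ring

section LocallyAMUC

variable {Y : Type*} [NormedAddCommGroup Y] [NormedSpace ℝ Y]

theorem exists_submodule_of_deltaTilde_pos {y : Y} {t : ℝ} (h : 0 < deltaTilde Y y t) :
    ∃ E : Submodule ℝ Y, IsClosed (E : Set Y) ∧ FiniteDimensional ℝ (Y ⧸ E) ∧
      ∃ r > 0, ∀ z ∈ E, ‖z‖ = 1 → 1 + r ≤ max ‖y + t • z‖ ‖y - t • z‖ := by
  obtain ⟨_, ⟨E, hE, hEf, rfl⟩, hr⟩ :=
    not_forall₂.1 fun hnonpos => h.not_ge (Real.sSup_nonpos hnonpos)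
  refine ⟨E, hE, hEf, _, not_le.1 hr, fun z hz hz1 => ?_⟩
  have hbdd : BddBelow
      {m : ℝ | ∃ z : Y, z ∈ E ∧ ‖z‖ = 1 ∧ m = max ‖y + t • z‖ ‖y - t • z‖} :=
    ⟨0, by rintro _ ⟨z, -, -, rfl⟩; positivity⟩
  linarith [csInf_le hbdd ⟨z, hz, hz1, rfl⟩]

theorem LocallyAMUC.exists_forall_one_lt_max (hY : LocallyAMUC Y) {y : Y} (hy : ‖y‖ = 1) {s : ℝ}
    (hs : 0 < s) :
    ∃ E : Submodule ℝ Y, IsClosed (E : Set Y) ∧ FiniteDimensional ℝ (Y ⧸ E) ∧ ∃ η > 0,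
      ∀ u : Y, ‖u‖ = 1 → ‖(Submodule.Quotient.mk u : Y ⧸ E)‖ < η →
        1 < max ‖y + s • u‖ ‖y - s • u‖ := by
  obtain ⟨E, hE, hEf, r, hr, hmax⟩ := exists_submodule_of_deltaTilde_pos (hY y hy s hs)
  refine ⟨E, hE, hEf, min (r / (4 * s)) 1, by positivity, fun u hu hq => ?_⟩
  obtain ⟨z, hzE, hz, huz⟩ := E.exists_mem_norm_eq_one_norm_sub_lt hu (min_le_right _ _) hq
  have hsuz : ‖s • (u - z)‖ < r := by
    rw [norm_smul, Real.norm_of_nonneg hs.le]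
    calc s * ‖u - z‖ < s * (2 * (r / (4 * s))) :=
          mul_lt_mul_of_pos_left (huz.trans_le (by gcongr; exact min_le_left _ _)) hs
      _ < r := by field_simp; linarith
  have hplus : ‖y + s • z‖ ≤ ‖y + s • u‖ + ‖s • (u - z)‖ := by
    rw [show y + s • z = (y + s • u) - s • (u - z) by rw [smul_sub]; abel]
    exact norm_sub_le _ _
  have hminus : ‖y - s • z‖ ≤ ‖y - s • u‖ + ‖s • (u - z)‖ := by
    rw [show y - s • z = (y - s • u) + s • (u - z) by rw [smul_sub]; abel]
    exact norm_add_le _ _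
  by_contra! hle
  obtain ⟨hle₁, hle₂⟩ := max_le_iff.1 hle
  exact (hmax z hzE hz).not_gt (max_lt (by linarith) (by linarith))

theorem LocallyAMUC.tendsto_norm_zero (hY : LocallyAMUC Y) {y : Y} (hy : ‖y‖ = 1) {ι : Type*}
    {l : Filter ι} {v : ι → Y} (hv : ∀ φ : Y →L[ℝ] ℝ, Tendsto (fun i => φ (v i)) l (𝓝 0))
    (hle : ∀ᶠ i in l, ‖y + v i‖ ≤ 1 ∧ ‖y - v i‖ ≤ 1) : Tendsto (fun i => ‖v i‖) l (𝓝 0) := by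
  refine Metric.tendsto_nhds.2 fun ε hε => ?_
  obtain ⟨E, hE, hEf, η, hη, hmax⟩ := hY.exists_forall_one_lt_max hy hε
  have hq : Tendsto (fun i => ‖E.mkQL (v i)‖) l (𝓝 0) := by
    simpa using (tendsto_zero_of_forall_dual_tendsto fun φ => hv (φ.comp E.mkQL)).norm
  filter_upwards [hle, hq.eventually (gt_mem_nhds (mul_pos hε hη))]
    with i ⟨hplus, hminus⟩ hqi
  rw [Real.dist_0_eq_abs, abs_norm]
  by_contra! hεv
  have hv0 : v i ≠ 0 := norm_pos_iff.1 (hε.trans_le hεv)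
  have hscale : ε / ‖v i‖ ∈ Set.Icc (0 : ℝ) 1 :=
    ⟨by positivity, div_le_one_of_le₀ hεv (norm_nonneg _)⟩
  have hsmul : ε • (‖v i‖⁻¹ • v i) = (ε / ‖v i‖) • v i := by
    rw [smul_smul, div_eq_mul_inv]
  have hu : ‖‖v i‖⁻¹ • v i‖ = 1 := by
    rw [norm_smul, norm_inv, norm_norm, inv_mul_cancel₀ (norm_ne_zero_iff.2 hv0)]
  refine (hmax _ hu ?_).not_ge (max_le ?_ ?_)
  · calc ‖(Submodule.Quotient.mk (‖v i‖⁻¹ • v i) : Y ⧸ E)‖ = ‖v i‖⁻¹ * ‖E.mkQL (v i)‖ := by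
          rw [Submodule.Quotient.mk_smul, norm_smul, norm_inv, norm_norm]
          rfl
      _ ≤ ε⁻¹ * ‖E.mkQL (v i)‖ := by gcongr
      _ < ε⁻¹ * (ε * η) := by gcongr
      _ = η := by field_simp
  · rw [hsmul]
    exact norm_add_smul_le_of_norm_le hy.le hplus hscale
  · rw [hsmul, sub_eq_add_neg, ← smul_neg]
    exact norm_add_smul_le_of_norm_le hy.le (by rwa [← sub_eq_add_neg]) hscale

theorem LocallyAMUC.tendsto_norm_zero_of_ne_zero (hY : LocallyAMUC Y) {y : Y} (hy : y ≠ 0)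
    {ι : Type*} {l : Filter ι} {v : ι → Y}
    (hv : ∀ φ : Y →L[ℝ] ℝ, Tendsto (fun i => φ (v i)) l (𝓝 0))
    (hle : ∀ᶠ i in l, ‖y + v i‖ ≤ ‖y‖ ∧ ‖y - v i‖ ≤ ‖y‖) : Tendsto (fun i => ‖v i‖) l (𝓝 0) := by
  have hy0 : 0 < ‖y‖ := norm_pos_iff.2 hy
  have hscaled := hY.tendsto_norm_zero (y := ‖y‖⁻¹ • y) (v := fun i => ‖y‖⁻¹ • v i)
    (by rw [norm_smul, norm_inv, norm_norm, inv_mul_cancel₀ hy0.ne'])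
    (fun φ => by simpa using (hv φ).const_mul ‖y‖⁻¹)
    (hle.mono fun i hi => by
      simp only [← smul_add, ← smul_sub, norm_smul, norm_inv, norm_norm]
      exact ⟨inv_mul_le_one_of_le₀ hi.1 hy0.le, inv_mul_le_one_of_le₀ hi.2 hy0.le⟩)
  simpa [norm_smul, hy0.ne'] using hscaled.const_mul ‖y‖

end LocallyAMUC

theorem normAttaining_dStar_to_locallyAMUC_general (Y : Type*) [NormedAddCommGroup Y]
    [NormedSpace ℝ Y] (hY : LocallyAMUC Y)
    (w : ℕ → ℝ) (hw : Admissible w)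
    (D : Type*) [NormedAddCommGroup D] [NormedSpace ℝ D]
    (j : D →ₗ[ℝ] (ℕ → ℝ)) (hj : IsDStarRep w D j)
    (e : ℕ → D) (he : ∀ n : ℕ, j (e n) = (Pi.single n 1 : ℕ → ℝ))
    (T : D →L[ℝ] Y) (hT : ∃ x : D, ‖x‖ ≤ 1 ∧ ‖T x‖ = ‖T‖) :
    Tendsto (fun n => ‖T (e n)‖) atTop (𝓝 0) := by
  obtain ⟨x, hx, hTx⟩ := hT
  by_cases hTx0 : T x = 0
  · have hT0 : T = 0 := norm_eq_zero.1 (hTx ▸ norm_eq_zero.2 hTx0)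
    simp [hT0]
  obtain ⟨t, ht, hflat⟩ := hj.exists_pos_eventually_norm_add_smul_le_one hw he hx
  have hTe := hY.tendsto_norm_zero_of_ne_zero hTx0 (v := fun n => t • T (e n))
    (fun φ => by simpa using (hj.tendsto_apply_zero hw he (φ.comp T)).const_mul t)
    (hflat.mono fun n hn => by
      simpa [hTx] using And.intro (T.le_opNorm_of_le hn.1) (T.le_opNorm_of_le hn.2))
  simpa [norm_smul, abs_of_pos ht, ht.ne'] using hTe.const_mul t⁻¹

/-- if `Y` is locally AMUC and `w` is admissible, then every norm-attaining
bounded linear operator `T : d_*(w) → Y` satisfies `‖T e_n‖ → 0`, where `(e_n)` is the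
unit vector basis of `d_*(w)` (here `d_*(w)` is represented by any Banach space `D`
isometrically identified with it via `j`). -/
theorem normAttaining_dStar_to_locallyAMUC (Y : Type*) [NormedAddCommGroup Y]
    [NormedSpace ℝ Y] [CompleteSpace Y] (hY : LocallyAMUC Y)
    (w : ℕ → ℝ) (hw : Admissible w)
    (D : Type*) [NormedAddCommGroup D] [NormedSpace ℝ D] [CompleteSpace D]
    (j : D →ₗ[ℝ] (ℕ → ℝ)) (hj : IsDStarRep w D j)
    (e : ℕ → D) (he : ∀ n : ℕ, j (e n) = (Pi.single n 1 : ℕ → ℝ))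
    (T : D →L[ℝ] Y) (hT : ∃ x : D, ‖x‖ ≤ 1 ∧ ‖T x‖ = ‖T‖) :
    Tendsto (fun n => ‖T (e n)‖) atTop (𝓝 0) :=
  normAttaining_dStar_to_locallyAMUC_general Y hY w hw D j hj e he T hT
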